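/- Let r be a nonzero rational number with reduced fraction a/b (so b ≥ 1, gcd(|a|, b) = 1, and a ≠ 0). Then r is at distance at most 2 from 0 in the Farey graph if and only if there exists an integer n such that b = n·a + 1 or b = n·a − 1. -/

import Mathlib

/-- Numerator of a vertex of the Farey graph (`none` is `∞ = 1/0`). -/
def fareyNum : Option ℚ → ℤ
  | none => 1
  | some r => r.num

/-- Denominator of a vertex of the Farey graph (`none` is `∞ = 1/0`). -/
def fareyDen : Option ℚ → ℤ
  | none => 0
  | some r => (r.den : ℤ)

/-- The Farey graph: vertices are `ℚ ∪ {∞}`, and two vertices with reduced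
fractions `a/b` and `c/d` are adjacent iff `|a·d − b·c| = 1`. -/
def fareyGraph : SimpleGraph (Option ℚ) where
  Adj v w := |fareyNum v * fareyDen w - fareyDen v * fareyNum w| = 1
  symm := by
    constructor
    intro v w h
    have e : fareyNum w * fareyDen v - fareyDen w * fareyNum v =
        -(fareyNum v * fareyDen w - fareyDen v * fareyNum w) := by ring
    rw [e, abs_neg]
    exact h
  loopless := by
    constructor
    intro v h
    have e : fareyNum v * fareyDen v - fareyDen v * fareyNum v = 0 := by ring
    rw [e] at h
    simp at h

lemma fareyAdj_iff (v w : Option ℚ) :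
    fareyGraph.Adj v w ↔ |fareyNum v * fareyDen w - fareyDen v * fareyNum w| = 1 :=
  Iff.rfl

/-- Every rational is reachable from `∞` in the Farey graph. -/
lemma farey_reachable_inf : ∀ (b : ℕ) (q : ℚ), q.den = b →
    fareyGraph.Reachable none (some q) := by
  intro b
  induction b using Nat.strong_induction_on with
  | _ b ih =>
    intro q hq
    rcases Nat.lt_or_ge q.den 2 with hd | hd
    · -- q.den = 1, q is an integer, adjacent to ∞
      have hden : q.den = 1 := by have := q.pos; omega
      have : fareyGraph.Adj none (some q) := by
        rw [fareyAdj_iff]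
        simp [fareyNum, fareyDen, hden]
      exact this.reachable
    · -- q.den ≥ 2
      have ha : IsCoprime q.num (q.den : ℤ) := by
        rw [Int.isCoprime_iff_gcd_eq_one, Int.gcd]
        simpa using q.reduced
      obtain ⟨u, v, huv⟩ := ha
      set a : ℤ := q.num
      set B : ℤ := (q.den : ℤ)
      have hB2 : (2 : ℤ) ≤ B := by show (2:ℤ) ≤ (q.den : ℤ); exact_mod_cast hd
      have hBpos : 0 < B := by omega
      set b' : ℤ := u % B with hb'
      have hb0 : 0 ≤ b' := Int.emod_nonneg u (by omega)
      have hbB : b' < B := Int.emod_lt_of_pos u hBpos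
      set a' : ℤ := -v - a * (u / B) with ha'
      have key : a * b' - B * a' = 1 := by
        have := Int.emod_add_mul_ediv u B
        calc a * b' - B * a' = a * (u % B + B * (u / B)) + v * B := by ring
        _ = a * u + v * B := by rw [this]
        _ = 1 := by linarith [huv]
      have hb0' : b' ≠ 0 := by
        intro h
        rw [h] at key
        have : B ∣ 1 := ⟨-a', by linarith⟩
        have := Int.le_of_dvd one_pos this
        omega
      have hbpos : 0 < b' := lt_of_le_of_ne hb0 (Ne.symm hb0')
      have hcop : a'.natAbs.Coprime b'.toNat := by
        have : IsCoprime a' b' := ⟨-B, a, by linarith [key]⟩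
        rw [Int.isCoprime_iff_gcd_eq_one, Int.gcd] at this
        have e : b'.toNat = b'.natAbs := by omega
        rwa [e]
      set q' : ℚ := Rat.mk' a' b'.toNat (by omega) hcop with hq'
      have hq'num : q'.num = a' := rfl
      have hq'den : (q'.den : ℤ) = b' := Int.toNat_of_nonneg hb0
      have hadj : fareyGraph.Adj (some q') (some q) := by
        rw [fareyAdj_iff]
        show |q'.num * B - (q'.den : ℤ) * a| = 1
        rw [hq'num, hq'den]
        have : a' * B - b' * a = -(a * b' - B * a') := by ring
        rw [this, abs_neg, key]
        simp
      have hlt : q'.den < b := by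
        have h1 : (q'.den : ℤ) < (q.den : ℤ) := by rw [hq'den]; exact hbB
        rw [← hq]
        exact_mod_cast h1
      exact (ih q'.den hlt q' rfl).trans hadj.reachable

lemma farey_adj_zero_inf : fareyGraph.Adj (some 0) none := by
  rw [fareyAdj_iff]; simp [fareyNum, fareyDen]

lemma farey_reachable (q : ℚ) : fareyGraph.Reachable (some 0) (some q) :=
  farey_adj_zero_inf.reachable.trans (farey_reachable_inf q.den q rfl)

/-- A nonzero rational `r` with reduced fraction `a/b` is at distance at most
`2` from `0` in the Farey graph iff `b = n·a ± 1` for some integer `n`. -/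
theorem farey_ball_radius_two (r : ℚ) (hr : r ≠ 0) :
    fareyGraph.dist (some 0) (some r) ≤ 2 ↔
      ∃ n : ℤ, (r.den : ℤ) = n * r.num + 1 ∨ (r.den : ℤ) = n * r.num - 1 := by
  constructor
  · intro hdist
    obtain ⟨p, hp⟩ := (farey_reachable r).exists_walk_length_eq_dist
    have hlen : p.length ≤ 2 := hp ▸ hdist
    clear hp hdist
    cases p with
    | nil => exact absurd rfl hr
    | cons h1 p1 =>
      rename_i v
      cases p1 with
      | nil =>
        -- Adj 0 r : |r.num| = 1
        rw [fareyAdj_iff] at h1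
        have : |(-r.num : ℤ)| = 1 := by
          simpa [fareyNum, fareyDen] using h1
        rw [abs_neg, abs_eq (by norm_num : (0:ℤ) ≤ 1)] at this
        rcases this with h | h
        · exact ⟨(r.den : ℤ) - 1, Or.inl (by rw [h]; ring)⟩
        · exact ⟨-((r.den : ℤ) - 1), Or.inl (by rw [h]; ring)⟩
      | cons h2 p2 =>
        rename_i w
        have hw : w = some r := by
          have : p2.length = 0 := by simp only [SimpleGraph.Walk.length_cons] at hlen; omega
          exact p2.eq_of_length_eq_zero this
        subst hw
        rw [fareyAdj_iff] at h1 h2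
        cases v with
        | none =>
          -- Adj ∞ r : |r.den| = 1
          have : |(r.den : ℤ)| = 1 := by simpa [fareyNum, fareyDen] using h2
          rw [abs_eq (by norm_num : (0:ℤ) ≤ 1)] at this
          rcases this with h | h
          · exact ⟨0, Or.inl (by rw [h]; ring)⟩
          · exact ⟨0, Or.inr (by rw [h]; ring)⟩
        | some q =>
          have hqn : |(-q.num : ℤ)| = 1 := by
            simpa [fareyNum, fareyDen] using h1
          rw [abs_neg, abs_eq (by norm_num : (0:ℤ) ≤ 1)] at hqn
          have h2' : |q.num * (r.den : ℤ) - (q.den : ℤ) * r.num| = 1 := h2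
          rw [abs_eq (by norm_num : (0:ℤ) ≤ 1)] at h2'
          refine ⟨q.num * (q.den : ℤ), ?_⟩
          rcases hqn with hc | hc <;> rcases h2' with he | he
          · exact Or.inl (by rw [hc] at he ⊢; linarith)
          · exact Or.inr (by rw [hc] at he ⊢; linarith)
          · exact Or.inr (by rw [hc] at he ⊢; nlinarith)
          · exact Or.inl (by rw [hc] at he ⊢; nlinarith)
  · rintro ⟨n, hn⟩
    rcases eq_or_ne n 0 with rfl | hn0
    · -- b = ±1 so b = 1; walk through ∞
      have hb1 : (r.den : ℤ) = 1 := by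
        have hbpos : (1 : ℤ) ≤ (r.den : ℤ) := by exact_mod_cast r.pos
        rcases hn with h | h <;> omega
      have hadj2 : fareyGraph.Adj none (some r) := by
        rw [fareyAdj_iff]
        show |1 * (r.den : ℤ) - 0 * r.num| = 1
        rw [hb1]; norm_num
      have hd := fareyGraph.dist_le
        (SimpleGraph.Walk.cons farey_adj_zero_inf (SimpleGraph.Walk.cons hadj2 SimpleGraph.Walk.nil))
      simpa using hd
    · -- middle vertex sign(n)/|n|
      have hnna : n.natAbs ≠ 0 := by simpa using hn0
      rcases Int.lt_or_lt_of_ne hn0 with hneg | hpos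
      · -- n < 0, middle vertex -1/|n|
        have hcop : (-1 : ℤ).natAbs.Coprime n.natAbs := Nat.coprime_one_left _
        set q : ℚ := Rat.mk' (-1) n.natAbs hnna hcop with hq
        have hqnum : q.num = -1 := rfl
        have hqden : (q.den : ℤ) = -n := by
          show ((n.natAbs : ℕ) : ℤ) = -n
          omega
        have hadj1 : fareyGraph.Adj (some 0) (some q) := by
          rw [fareyAdj_iff]
          show |(0:ℚ).num * (q.den : ℤ) - ((0:ℚ).den : ℤ) * q.num| = 1
          rw [hqnum]; simp
        have hadj2 : fareyGraph.Adj (some q) (some r) := by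
          rw [fareyAdj_iff]
          show |q.num * (r.den : ℤ) - (q.den : ℤ) * r.num| = 1
          rw [hqnum, hqden]
          rcases hn with h | h
          · have e : (-1) * (r.den : ℤ) - (-n) * r.num = -1 := by rw [h]; ring
            rw [e]; simp
          · have e : (-1) * (r.den : ℤ) - (-n) * r.num = 1 := by rw [h]; ring
            rw [e]; simp
        have hd := fareyGraph.dist_le
          (SimpleGraph.Walk.cons hadj1 (SimpleGraph.Walk.cons hadj2 SimpleGraph.Walk.nil))
        simpa using hd
      · -- n > 0, middle vertex 1/n
        have hcop : (1 : ℤ).natAbs.Coprime n.natAbs := Nat.coprime_one_left _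
        set q : ℚ := Rat.mk' 1 n.natAbs hnna hcop with hq
        have hqnum : q.num = 1 := rfl
        have hqden : (q.den : ℤ) = n := by
          show ((n.natAbs : ℕ) : ℤ) = n
          omega
        have hadj1 : fareyGraph.Adj (some 0) (some q) := by
          rw [fareyAdj_iff]
          show |(0:ℚ).num * (q.den : ℤ) - ((0:ℚ).den : ℤ) * q.num| = 1
          rw [hqnum]; simp
        have hadj2 : fareyGraph.Adj (some q) (some r) := by
          rw [fareyAdj_iff]
          show |q.num * (r.den : ℤ) - (q.den : ℤ) * r.num| = 1
          rw [hqnum, hqden]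
          rcases hn with h | h
          · have e : 1 * (r.den : ℤ) - n * r.num = 1 := by rw [h]; ring
            rw [e]; simp
          · have e : 1 * (r.den : ℤ) - n * r.num = -1 := by rw [h]; ring
            rw [e]; simp
        have hd := fareyGraph.dist_le
          (SimpleGraph.Walk.cons hadj1 (SimpleGraph.Walk.cons hadj2 SimpleGraph.Walk.nil))
        simpa using hd
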